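/- Let θ be a primitive aperiodic bijective (simplified) substitution. Then the structural semigroup M^fib_0(X_θ) is isomorphic to the matrix semigroup M[G_θ; I_θ, {±}; A], where G_θ is the structure group of θ, I_θ is its R-set, and, for a fixed g₀ ∈ I_θ, the sandwich matrix A has entries a_{+,g} = 1 and a_{−,g} = g₀ g^{-1} for g ∈ I_θ. -/

import Mathlib

/-!
Every point of the fibre `π⁻¹(0)` is a `θ`-fixed point `θ^∞(a).θ^∞(b)` for a legal word `ab`,
and `θⁿ(y)` restricted to `[-ℓⁿ, ℓⁿ)` only depends on `y₋₁y₀`. Let `σ^m → f` along an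
ultrafilter with `f` fibre preserving. Recognizability of `θ` forces `ℓⁿ ∣ m` eventually for
every `n`, so on the fibre `f` is either the identity or the map
`x ↦ θ^∞(q c).θ^∞(p c)`, where `c = x₀` (sign `+`) or `c = x₋₁` (sign `−`) and `q, p` are
consecutive columns `(θˢ)_{u-1}, (θˢ)_u` of an expansion; conversely each such map is the limit
of `σ^{ℓⁿ m}` for a suitable `m`. Two such maps compose by right multiplication of `(q, p)` by a
column of the inner one, and the coordinates `(i, g, ε) ↦ (ε, i⁻¹ g v_ε, g v_ε)` with
`v₊ = 1`, `v₋ = g₀` turn this composition into the product of `M[G_θ; I_θ, {±}; A]`. This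
semigroup is simple, `(i, g, ε) = (i, g h⁻¹, +) (j, h, μ) (g₀, 1, ε)`, and the only other element
of `E^fib_0` is the identity, so it is the kernel.
-/

variable {A : Type*}

/-- The bijections `(θⁿ)_i` in the expansion of the `n`-th power of the bijective
substitution `θ` of length `ℓ`:  `θⁿ(a) = (θⁿ)₀(a) ⋯ (θⁿ)_{ℓⁿ−1}(a)`. -/
def expandPerm (θ : ℕ → Equiv.Perm A) (ℓ : ℕ) : ℕ → ℕ → Equiv.Perm A
  | 0, _ => 1
  | n + 1, k => θ (k % ℓ) * expandPerm θ ℓ n (k / ℓ)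

/-- The substitution shift `X_θ`: the set of bi-infinite sequences all of whose finite
subwords occur in some `θᵏ(a)`. -/
def XSet (θ : ℕ → Equiv.Perm A) (ℓ : ℕ) : Set (ℤ → A) :=
  { x | ∀ (i : ℤ) (m : ℕ), ∃ (k : ℕ) (a : A) (j : ℕ), j + m ≤ ℓ ^ k ∧
      ∀ t : ℕ, t < m → x (i + (t : ℤ)) = expandPerm θ ℓ k (j + t) a }

/-- `θ` is primitive: some power `θᵏ(a)` contains every letter, for every `a`. -/
def IsPrimitive (θ : ℕ → Equiv.Perm A) (ℓ : ℕ) : Prop :=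
  ∃ k : ℕ, 0 < k ∧ ∀ a b : A, ∃ i : ℕ, i < ℓ ^ k ∧ expandPerm θ ℓ k i a = b

/-- `θ` is simplified: `θ₀ = θ_{ℓ-1} = id` and each word `θ(a)` contains all letters. -/
def IsSimplified (θ : ℕ → Equiv.Perm A) (ℓ : ℕ) : Prop :=
  θ 0 = 1 ∧ θ (ℓ - 1) = 1 ∧ ∀ a b : A, ∃ i : ℕ, i < ℓ ∧ θ i a = b

/-- The left shift `σⁿ` on bi-infinite sequences. -/
def shiftSeq (n : ℤ) (x : ℤ → A) : ℤ → A := fun j => x (j + n)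

/-- The substitution `θ` applied to a bi-infinite sequence (with the block of `x₀`
starting at index `0`). -/
def substSeq (θ : ℕ → Equiv.Perm A) (ℓ : ℕ) (x : ℤ → A) : ℤ → A :=
  fun m => θ ((m.emod (ℓ : ℤ)).toNat) (x (m.ediv (ℓ : ℤ)))

theorem shiftSeq_mem {θ : ℕ → Equiv.Perm A} {ℓ : ℕ} {x : ℤ → A} (n : ℤ)
    (hx : x ∈ XSet θ ℓ) : shiftSeq n x ∈ XSet θ ℓ := by
  intro i m
  obtain ⟨k, a, j, h1, h2⟩ := hx (i + n) m
  refine ⟨k, a, j, h1, fun t ht => ?_⟩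
  have h3 := h2 t ht
  show x (i + (t : ℤ) + n) = _
  rw [show i + (t : ℤ) + n = i + n + (t : ℤ) by ring]
  exact h3

/-- The shift, as a self-map of the substitution shift `X_θ`. -/
def shiftX (θ : ℕ → Equiv.Perm A) (ℓ : ℕ) (n : ℤ) (x : ↥(XSet θ ℓ)) : ↥(XSet θ ℓ) :=
  ⟨shiftSeq n x.1, shiftSeq_mem n x.2⟩

/-- The Ellis semigroup `E(X_θ)`: the closure of `{σⁿ : n ∈ ℤ}` in the space of self-maps
of `X_θ` with the topology of pointwise convergence. -/
def EllisZ [TopologicalSpace A] (θ : ℕ → Equiv.Perm A) (ℓ : ℕ) :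
    Set (↥(XSet θ ℓ) → ↥(XSet θ ℓ)) :=
  closure (Set.range fun n : ℤ => shiftX θ ℓ n)

/-- The generators `(θⁿ)_i` of the structure group. -/
def GensSet (θ : ℕ → Equiv.Perm A) (ℓ : ℕ) : Set (Equiv.Perm A) :=
  { g | ∃ (n i : ℕ), i < ℓ ^ n ∧ g = expandPerm θ ℓ n i }

/-- The structure group `G_θ`. -/
def Gtheta (θ : ℕ → Equiv.Perm A) (ℓ : ℕ) : Subgroup (Equiv.Perm A) :=
  Subgroup.closure (GensSet θ ℓ)

/-- The R-set `I_θ`. -/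
def RSet (θ : ℕ → Equiv.Perm A) (ℓ : ℕ) : Set (Equiv.Perm A) :=
  { g | ∃ (n i : ℕ), 1 ≤ i ∧ i < ℓ ^ n ∧
      g = expandPerm θ ℓ n i * (expandPerm θ ℓ n (i - 1))⁻¹ }

theorem rset_subset_G (θ : ℕ → Equiv.Perm A) (ℓ : ℕ) {g : Equiv.Perm A}
    (hg : g ∈ RSet θ ℓ) : g ∈ Gtheta θ ℓ := by
  obtain ⟨n, i, h1, h2, rfl⟩ := hg
  exact mul_mem (Subgroup.subset_closure ⟨n, i, h2, rfl⟩)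
    (inv_mem (Subgroup.subset_closure ⟨n, i - 1, by omega, rfl⟩))

/-- The sandwich matrix `A` of `M[G_θ; I_θ, {±}; A]`:
`a_{+,g} = 1` and `a_{−,g} = g₀ g⁻¹`, for a fixed `g₀ ∈ I_θ` (`true = +`, `false = −`). -/
def sandwichA (θ : ℕ → Equiv.Perm A) (ℓ : ℕ) (g₀ : Equiv.Perm A) (hg₀ : g₀ ∈ RSet θ ℓ) :
    Bool → ↥(RSet θ ℓ) → ↥(Gtheta θ ℓ) :=
  fun b j =>
    if b then 1
    else ⟨g₀ * (j : Equiv.Perm A)⁻¹,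
      mul_mem (rset_subset_G θ ℓ hg₀) (inv_mem (rset_subset_G θ ℓ j.2))⟩

/-- Multiplication of the Rees matrix semigroup `M[G; ι, Λ; A]`. -/
def matMul {ι Λ γ : Type*} [Mul γ] (Amat : Λ → ι → γ) (p q : ι × γ × Λ) : ι × γ × Λ :=
  (p.1, p.2.1 * Amat p.2.2 q.1 * q.2.1, q.2.2)

/-- The fibre `π⁻¹(0)` of the odometer factor map: `⋂ₙ θⁿ(X_θ)`. -/
def Fib0 (θ : ℕ → Equiv.Perm A) (ℓ : ℕ) : Set ↥(XSet θ ℓ) :=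
  { x | ∀ n : ℕ, ∃ z ∈ XSet θ ℓ, (substSeq θ ℓ)^[n] z = (x : ℤ → A) }

/-- The fibre-preserving part `E^fib(X_θ)`: elements of the Ellis semigroup preserving each
fibre of the odometer factor map (i.e. each set `σⁱ(θⁿ(X_θ))`). -/
def EfibSet [TopologicalSpace A] (θ : ℕ → Equiv.Perm A) (ℓ : ℕ) :
    Set (↥(XSet θ ℓ) → ↥(XSet θ ℓ)) :=
  { f | f ∈ EllisZ θ ℓ ∧ ∀ (n i : ℕ) (x : ↥(XSet θ ℓ)),
      (∃ z ∈ XSet θ ℓ, shiftSeq (i : ℤ) ((substSeq θ ℓ)^[n] z) = (x : ℤ → A)) →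
      ∃ z ∈ XSet θ ℓ, shiftSeq (i : ℤ) ((substSeq θ ℓ)^[n] z) = (f x : ℤ → A) }

/-- The restriction `E^fib_0(X_θ)` of `E^fib(X_θ)` to the fibre `π⁻¹(0)`. -/
def Efib0 [TopologicalSpace A] (θ : ℕ → Equiv.Perm A) (ℓ : ℕ) :
    Set (↥(Fib0 θ ℓ) → ↥(Fib0 θ ℓ)) :=
  { φ | ∃ f ∈ EfibSet θ ℓ, ∀ x : ↥(Fib0 θ ℓ), (φ x : ↥(XSet θ ℓ)) = f (x : ↥(XSet θ ℓ)) }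

/-- `M` is a (two-sided) ideal of the semigroup `S` of self-maps under composition. -/
def IsIdealIn {α : Type*} (S M : Set (α → α)) : Prop :=
  M.Nonempty ∧ M ⊆ S ∧ ∀ f ∈ S, ∀ g ∈ M, f ∘ g ∈ M ∧ g ∘ f ∈ M

/-- `M` is the kernel (smallest two-sided ideal) of the semigroup `S`. -/
def IsKernelIn {α : Type*} (S M : Set (α → α)) : Prop :=
  IsIdealIn S M ∧ ∀ N, IsIdealIn S N → M ⊆ N

open Function Filter Topology

theorem isKernelIn_of_forall_eq_id_or_mem {α : Type*} {S K : Set (α → α)} (hne : K.Nonempty)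
    (hKS : K ⊆ S) (hS : ∀ f ∈ S, f = id ∨ f ∈ K) (hmul : ∀ f ∈ K, ∀ g ∈ K, f ∘ g ∈ K)
    (hsimple : ∀ f ∈ K, ∀ g ∈ K, ∃ u ∈ K, ∃ v ∈ K, u ∘ f ∘ v = g) : IsKernelIn S K := by
  refine ⟨⟨hne, hKS, fun f hf g hg => ?_⟩, fun N ⟨⟨ψ, hψ⟩, hNS, hN⟩ g hg => ?_⟩
  · rcases hS f hf with rfl | hf
    · exact ⟨hg, hg⟩
    · exact ⟨hmul f hf g hg, hmul g hg f hf⟩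
  · rcases hS ψ (hNS hψ) with rfl | hψK
    · exact (hN g (hKS hg) id hψ).1
    · obtain ⟨u, hu, v, hv, rfl⟩ := hsimple ψ hψK g hg
      exact (hN u (hKS hu) _ (hN v (hKS hv) ψ hψ).2).1

section Expansion

variable {θ : ℕ → Equiv.Perm A} {ℓ : ℕ}

theorem add_pow_mul_lt_pow_add {i k v s : ℕ} (hi : i < ℓ ^ k) (hv : v < ℓ ^ s) :
    i + ℓ ^ k * v < ℓ ^ (k + s) := by
  calc i + ℓ ^ k * v < ℓ ^ k * (v + 1) := by rw [mul_add_one]; omega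
    _ ≤ ℓ ^ k * ℓ ^ s := Nat.mul_le_mul_left _ hv
    _ = ℓ ^ (k + s) := (pow_add ℓ k s).symm

theorem expandPerm_add (n s k : ℕ) :
    expandPerm θ ℓ (n + s) k =
      expandPerm θ ℓ n (k % ℓ ^ n) * expandPerm θ ℓ s (k / ℓ ^ n) := by
  induction n generalizing k with
  | zero => simp [expandPerm]
  | succ n ih =>
    rw [Nat.add_right_comm, expandPerm, ih, expandPerm, mul_assoc, pow_succ',
      Nat.mod_mul_right_div_self, Nat.mod_mod_of_dvd _ (dvd_mul_right ℓ _),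
      Nat.div_div_eq_div_mul]

theorem expandPerm_add_mul {k i : ℕ} (hi : i < ℓ ^ k) (s v : ℕ) :
    expandPerm θ ℓ (k + s) (i + ℓ ^ k * v) = expandPerm θ ℓ k i * expandPerm θ ℓ s v := by
  rw [expandPerm_add, Nat.add_mul_mod_self_left, Nat.mod_eq_of_lt hi,
    Nat.add_mul_div_left _ _ (by omega), Nat.div_eq_of_lt hi, zero_add]

theorem expandPerm_one {j : ℕ} (hj : j < ℓ) : expandPerm θ ℓ 1 j = θ j := by
  simp [expandPerm, Nat.mod_eq_of_lt hj]

theorem expandPerm_zero_right (h0 : θ 0 = 1) (n : ℕ) : expandPerm θ ℓ n 0 = 1 := by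
  induction n with
  | zero => rfl
  | succ n ih => simp [expandPerm, ih, h0]

theorem expandPerm_pow_sub_one (hl : 0 < ℓ) (h1 : θ (ℓ - 1) = 1) (n : ℕ) :
    expandPerm θ ℓ n (ℓ ^ n - 1) = 1 := by
  induction n with
  | zero => rfl
  | succ n ih =>
    have hpos := Nat.one_le_pow n ℓ hl
    have hidx : ℓ ^ (n + 1) - 1 = (ℓ ^ n - 1) + ℓ ^ n * (ℓ - 1) := by
      rw [pow_succ, Nat.mul_sub_one]
      have := Nat.le_mul_of_pos_right (ℓ ^ n) hl
      omega
    rw [hidx, expandPerm_add_mul (by omega), ih, expandPerm_one (by omega), h1, one_mul]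

theorem expandPerm_of_le (h0 : θ 0 = 1) {k i : ℕ} (hi : i < ℓ ^ k) {K : ℕ} (hk : k ≤ K) :
    expandPerm θ ℓ K i = expandPerm θ ℓ k i := by
  obtain ⟨s, rfl⟩ := Nat.exists_eq_add_of_le hk
  simpa [expandPerm_zero_right h0] using expandPerm_add_mul (θ := θ) hi s 0

theorem expandPerm_pow_sub_of_le (hl : 0 < ℓ) (h1 : θ (ℓ - 1) = 1) {k j : ℕ} (hj : 0 < j)
    (hjk : j ≤ ℓ ^ k) {K : ℕ} (hk : k ≤ K) :
    expandPerm θ ℓ K (ℓ ^ K - j) = expandPerm θ ℓ k (ℓ ^ k - j) := by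
  obtain ⟨s, rfl⟩ := Nat.exists_eq_add_of_le hk
  have hidx : ℓ ^ (k + s) - j = (ℓ ^ k - j) + ℓ ^ k * (ℓ ^ s - 1) := by
    rw [pow_add, Nat.mul_sub_one]
    have := Nat.le_mul_of_pos_right (ℓ ^ k) (Nat.one_le_pow s ℓ hl)
    omega
  rw [hidx, expandPerm_add_mul (by omega), expandPerm_pow_sub_one hl h1, mul_one]

end Expansion

section StructureGroup

variable {θ : ℕ → Equiv.Perm A} {ℓ : ℕ}

theorem one_mem_GensSet : (1 : Equiv.Perm A) ∈ GensSet θ ℓ := ⟨0, 0, by simp, rfl⟩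

theorem mul_mem_GensSet {g h : Equiv.Perm A} (hg : g ∈ GensSet θ ℓ) (hh : h ∈ GensSet θ ℓ) :
    g * h ∈ GensSet θ ℓ := by
  obtain ⟨n, i, hi, rfl⟩ := hg
  obtain ⟨s, v, hv, rfl⟩ := hh
  exact ⟨n + s, i + ℓ ^ n * v, add_pow_mul_lt_pow_add hi hv, (expandPerm_add_mul hi s v).symm⟩

theorem coe_Gtheta [Finite A] : (Gtheta θ ℓ : Set (Equiv.Perm A)) = GensSet θ ℓ :=
  congrArg SetLike.coe <| Subgroup.closure_toSubmonoid_of_finite.trans <|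
    Submonoid.closure_eq ⟨⟨GensSet θ ℓ, mul_mem_GensSet⟩, one_mem_GensSet⟩

theorem mem_Gtheta_iff [Finite A] {g : Equiv.Perm A} : g ∈ Gtheta θ ℓ ↔ g ∈ GensSet θ ℓ := by
  rw [← SetLike.mem_coe, coe_Gtheta]

def IsAdjacentColumns (θ : ℕ → Equiv.Perm A) (ℓ : ℕ) (q p : Equiv.Perm A) : Prop :=
  ∃ s u, 0 < u ∧ u < ℓ ^ s ∧ expandPerm θ ℓ s (u - 1) = q ∧ expandPerm θ ℓ s u = p

namespace IsAdjacentColumns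

variable {q p : Equiv.Perm A}

theorem mul_right (h : IsAdjacentColumns θ ℓ q p) {g : Equiv.Perm A} (hg : g ∈ GensSet θ ℓ) :
    IsAdjacentColumns θ ℓ (q * g) (p * g) := by
  obtain ⟨s, u, hu, hus, rfl, rfl⟩ := h
  obtain ⟨t, v, hv, rfl⟩ := hg
  refine ⟨s + t, u + ℓ ^ s * v, by omega, add_pow_mul_lt_pow_add hus hv, ?_,
    expandPerm_add_mul hus t v⟩
  rw [show u + ℓ ^ s * v - 1 = (u - 1) + ℓ ^ s * v by omega, expandPerm_add_mul (by omega)]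

theorem mem_RSet (h : IsAdjacentColumns θ ℓ q p) : p * q⁻¹ ∈ RSet θ ℓ := by
  obtain ⟨s, u, hu, hus, rfl, rfl⟩ := h
  exact ⟨s, u, hu, hus, rfl⟩

theorem left_mem (h : IsAdjacentColumns θ ℓ q p) : q ∈ GensSet θ ℓ := by
  obtain ⟨s, u, -, hus, rfl, -⟩ := h
  exact ⟨s, u - 1, by omega, rfl⟩

theorem right_mem (h : IsAdjacentColumns θ ℓ q p) : p ∈ GensSet θ ℓ := by
  obtain ⟨s, u, -, hus, -, rfl⟩ := h
  exact ⟨s, u, hus, rfl⟩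

end IsAdjacentColumns

theorem isAdjacentColumns_iff [Finite A] {q p : Equiv.Perm A} :
    IsAdjacentColumns θ ℓ q p ↔ p * q⁻¹ ∈ RSet θ ℓ ∧ p ∈ GensSet θ ℓ := by
  refine ⟨fun h => ⟨h.mem_RSet, h.right_mem⟩, fun ⟨⟨s, u, hu, hus, hR⟩, hp⟩ => ?_⟩
  have hcols : IsAdjacentColumns θ ℓ (expandPerm θ ℓ s (u - 1)) (expandPerm θ ℓ s u) :=
    ⟨s, u, hu, hus, rfl, rfl⟩
  have hg : (expandPerm θ ℓ s u)⁻¹ * p ∈ GensSet θ ℓ := by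
    rw [← mem_Gtheta_iff] at hp ⊢
    exact mul_mem (inv_mem (Subgroup.subset_closure ⟨s, u, hus, rfl⟩)) hp
  convert hcols.mul_right hg using 1
  · rw [← mul_assoc, show expandPerm θ ℓ s (u - 1) * (expandPerm θ ℓ s u)⁻¹ = (p * q⁻¹)⁻¹ by
      rw [hR]; group]
    group
  · group

end StructureGroup

section Sequences

variable {θ : ℕ → Equiv.Perm A} {ℓ : ℕ}

theorem exists_eq_mul_add {d : ℕ} (hd : 0 < d) (m : ℤ) :
    ∃ (q : ℤ) (r : ℕ), r < d ∧ m = d * q + r := by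
  have h₁ := Int.emod_nonneg m (by omega : (d : ℤ) ≠ 0)
  have h₂ := Int.emod_lt_of_pos m (by omega : (0 : ℤ) < d)
  have h₃ := Int.mul_ediv_add_emod m d
  generalize m / d = q at h₃
  exact ⟨q, (m % d).toNat, by omega, by omega⟩

theorem exists_eq_pow_mul_add (hl : 0 < ℓ) (n : ℕ) (m : ℤ) :
    ∃ (q : ℤ) (r : ℕ), r < ℓ ^ n ∧ m = (ℓ : ℤ) ^ n * q + r := by
  simpa using exists_eq_mul_add (pow_pos hl n) m

theorem shiftSeq_shiftSeq (a b : ℤ) (x : ℤ → A) :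
    shiftSeq a (shiftSeq b x) = shiftSeq (a + b) x :=
  funext fun j => congrArg x (add_assoc j a b)

theorem shiftSeq_zero (x : ℤ → A) : shiftSeq 0 x = x :=
  funext fun j => congrArg x (add_zero j)

theorem substSeq_apply_mul_add (z : ℤ → A) (q : ℤ) {r : ℕ} (hr : r < ℓ) :
    substSeq θ ℓ z (ℓ * q + r) = θ r (z q) := by
  obtain ⟨hdiv, hmod⟩ :=
    (Int.ediv_emod_unique (a := ℓ * q + r) (b := ℓ) (r := r) (q := q) (by omega)).2
      ⟨by ring, by omega, by omega⟩
  change θ ((_ % (ℓ : ℤ)).toNat) (z (_ / (ℓ : ℤ))) = _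
  rw [hdiv, hmod, Int.toNat_natCast]

theorem iterate_substSeq_apply (z : ℤ → A) (n : ℕ) (q : ℤ) {r : ℕ} (hr : r < ℓ ^ n) :
    (substSeq θ ℓ)^[n] z ((ℓ : ℤ) ^ n * q + r) = expandPerm θ ℓ n r (z q) := by
  induction n generalizing z q r with
  | zero =>
    obtain rfl : r = 0 := by simpa using hr
    simp [expandPerm]
  | succ n ih =>
    have hℓ : 0 < ℓ := Nat.pos_of_ne_zero (by rintro rfl; simp at hr)
    obtain ⟨r₀, r₁, hr₀, hr₁, rfl⟩ : ∃ r₀ r₁, r₀ < ℓ ^ n ∧ r₁ < ℓ ∧ r = r₀ + ℓ ^ n * r₁ :=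
      ⟨r % ℓ ^ n, r / ℓ ^ n, Nat.mod_lt _ (pow_pos hℓ n),
        Nat.div_lt_of_lt_mul (by rwa [← pow_succ]), (Nat.mod_add_div r _).symm⟩
    rw [iterate_succ_apply, show (ℓ : ℤ) ^ (n + 1) * q + ((r₀ + ℓ ^ n * r₁ : ℕ) : ℤ)
        = (ℓ : ℤ) ^ n * (ℓ * q + r₁) + r₀ by push_cast; ring, ih _ _ hr₀,
      substSeq_apply_mul_add _ _ hr₁, expandPerm_add_mul hr₀, expandPerm_one hr₁,
      Equiv.Perm.mul_apply]

theorem iterate_substSeq_shiftSeq (hl : 0 < ℓ) (n : ℕ) (q : ℤ) (z : ℤ → A) :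
    (substSeq θ ℓ)^[n] (shiftSeq q z) = shiftSeq ((ℓ : ℤ) ^ n * q) ((substSeq θ ℓ)^[n] z) := by
  funext m
  obtain ⟨q', r, hr, rfl⟩ := exists_eq_pow_mul_add hl n m
  change _ = (substSeq θ ℓ)^[n] z ((ℓ : ℤ) ^ n * q' + r + (ℓ : ℤ) ^ n * q)
  rw [iterate_substSeq_apply _ _ _ hr,
    show (ℓ : ℤ) ^ n * q' + r + (ℓ : ℤ) ^ n * q = (ℓ : ℤ) ^ n * (q' + q) + r by ring,
    iterate_substSeq_apply _ _ _ hr]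
  rfl

theorem substSeq_shiftSeq (hl : 0 < ℓ) (q : ℤ) (z : ℤ → A) :
    substSeq θ ℓ (shiftSeq q z) = shiftSeq (ℓ * q) (substSeq θ ℓ z) := by
  simpa using iterate_substSeq_shiftSeq (θ := θ) hl 1 q z

theorem substSeq_injective (hl : 0 < ℓ) (h0 : θ 0 = 1) : Injective (substSeq θ ℓ) := by
  intro z z' h
  funext q
  have := congrFun h (ℓ * q + (0 : ℕ))
  rwa [substSeq_apply_mul_add _ _ hl, substSeq_apply_mul_add _ _ hl, h0] at this

theorem iterate_substSeq_mem (hl : 0 < ℓ) {z : ℤ → A} (hz : z ∈ XSet θ ℓ) (n : ℕ) :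
    (substSeq θ ℓ)^[n] z ∈ XSet θ ℓ := by
  intro i m
  rcases Nat.eq_zero_or_pos m with rfl | hm
  · exact ⟨0, z 0, 0, by simp, fun t ht => absurd ht (Nat.not_lt_zero t)⟩
  obtain ⟨q, d, hd, rfl⟩ := exists_eq_pow_mul_add hl n i
  obtain ⟨k, a, j, hjm, hz⟩ := hz q m
  have hpow : 0 < ℓ ^ n := pow_pos hl n
  refine ⟨n + k, a, ℓ ^ n * j + d, ?_, fun t ht => ?_⟩
  · calc ℓ ^ n * j + d + m ≤ ℓ ^ n * (j + m) := by rw [mul_add]; nlinarith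
      _ ≤ ℓ ^ n * ℓ ^ k := Nat.mul_le_mul_left _ hjm
      _ = ℓ ^ (n + k) := (pow_add ℓ n k).symm
  · obtain ⟨t₀, t₁, ht₀, hdt⟩ : ∃ t₀ t₁, t₀ < ℓ ^ n ∧ d + t = t₀ + ℓ ^ n * t₁ :=
      ⟨_, _, Nat.mod_lt (d + t) hpow, (Nat.mod_add_div _ _).symm⟩
    have ht₁ : t₁ < m := by nlinarith
    calc (substSeq θ ℓ)^[n] z ((ℓ : ℤ) ^ n * q + d + t)
        = (substSeq θ ℓ)^[n] z ((ℓ : ℤ) ^ n * (q + t₁) + t₀) := by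
          have := congrArg (Nat.cast : ℕ → ℤ) hdt
          push_cast at this
          rw [show (ℓ : ℤ) ^ n * q + d + t = (ℓ : ℤ) ^ n * (q + t₁) + t₀ by
            linear_combination this]
      _ = expandPerm θ ℓ n t₀ (expandPerm θ ℓ k (j + t₁) a) := by
          rw [iterate_substSeq_apply _ _ _ ht₀, hz t₁ ht₁]
      _ = expandPerm θ ℓ (n + k) (ℓ ^ n * j + d + t) a := by
          rw [add_assoc, hdt, show ℓ ^ n * j + (t₀ + ℓ ^ n * t₁) = t₀ + ℓ ^ n * (j + t₁) by ring,
            expandPerm_add_mul ht₀, Equiv.Perm.mul_apply]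

end Sequences

section FixedPoints

variable {θ : ℕ → Equiv.Perm A} {ℓ : ℕ}

theorem neg_one_mem_Ico_pow (hl : 0 < ℓ) (n : ℕ) :
    (-1 : ℤ) ∈ Set.Ico (-(ℓ : ℤ) ^ n) ((ℓ : ℤ) ^ n) := by
  have : (1 : ℤ) ≤ (ℓ : ℤ) ^ n := one_le_pow₀ (by omega)
  constructor <;> omega

theorem zero_mem_Ico_pow (hl : 0 < ℓ) (n : ℕ) :
    (0 : ℤ) ∈ Set.Ico (-(ℓ : ℤ) ^ n) ((ℓ : ℤ) ^ n) := by
  have : (0 : ℤ) < (ℓ : ℤ) ^ n := pow_pos (by omega) n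
  constructor <;> omega

theorem eventually_mem_Ico_pow (hl : 2 ≤ ℓ) (j : ℤ) :
    ∀ᶠ n in atTop, j ∈ Set.Ico (-(ℓ : ℤ) ^ n) ((ℓ : ℤ) ^ n) := by
  refine eventually_atTop.2 ⟨j.natAbs, fun n hn => ?_⟩
  have : ((n : ℕ) : ℤ) < (ℓ : ℤ) ^ n := by exact_mod_cast Nat.lt_pow_self (by omega)
  constructor <;> omega

/-- `column θ ℓ m` is the bijection producing the letter at position `m` of the point
`θ^∞(a).θ^∞(b)`: read off the words `θⁿ(b)` from the left for `m ≥ 0`, and off the words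
`θⁿ(a)` from the right for `m < 0`. -/
def column (θ : ℕ → Equiv.Perm A) (ℓ : ℕ) (m : ℤ) : Equiv.Perm A :=
  if 0 ≤ m then expandPerm θ ℓ m.natAbs m.natAbs
  else expandPerm θ ℓ m.natAbs (ℓ ^ m.natAbs - m.natAbs)

def fixedPoint (θ : ℕ → Equiv.Perm A) (ℓ : ℕ) (a b : A) : ℤ → A :=
  fun m => column θ ℓ m (if 0 ≤ m then b else a)

theorem column_natCast (hl : 2 ≤ ℓ) (h0 : θ 0 = 1) {n i : ℕ} (hi : i < ℓ ^ n) :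
    column θ ℓ i = expandPerm θ ℓ n i := by
  rw [column, if_pos (Int.natCast_nonneg i), Int.natAbs_natCast]
  exact (expandPerm_of_le h0 (Nat.lt_pow_self (by omega)) (le_max_left i n)).symm.trans
    (expandPerm_of_le h0 hi (le_max_right i n))

theorem column_neg_natCast (hl : 2 ≤ ℓ) (h1 : θ (ℓ - 1) = 1) {n i : ℕ} (hi : 0 < i)
    (hin : i ≤ ℓ ^ n) : column θ ℓ (-i) = expandPerm θ ℓ n (ℓ ^ n - i) := by
  rw [column, if_neg (by omega), Int.natAbs_neg, Int.natAbs_natCast]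
  exact (expandPerm_pow_sub_of_le (by omega) h1 hi (Nat.lt_pow_self (by omega)).le
    (le_max_left i n)).symm.trans (expandPerm_pow_sub_of_le (by omega) h1 hi hin (le_max_right i n))

theorem fixedPoint_apply_natCast (hl : 2 ≤ ℓ) (h0 : θ 0 = 1) (a b : A) {n i : ℕ}
    (hi : i < ℓ ^ n) : fixedPoint θ ℓ a b i = expandPerm θ ℓ n i b := by
  rw [fixedPoint, if_pos (Int.natCast_nonneg i), column_natCast hl h0 hi]

theorem fixedPoint_apply_neg_natCast (hl : 2 ≤ ℓ) (h1 : θ (ℓ - 1) = 1) (a b : A) {n i : ℕ}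
    (hi : 0 < i) (hin : i ≤ ℓ ^ n) :
    fixedPoint θ ℓ a b (-i) = expandPerm θ ℓ n (ℓ ^ n - i) a := by
  rw [fixedPoint, if_neg (by omega), column_neg_natCast hl h1 hi hin]

theorem fixedPoint_apply_zero (a b : A) : fixedPoint θ ℓ a b 0 = b := rfl

theorem fixedPoint_apply_neg_one (hl : 2 ≤ ℓ) (h1 : θ (ℓ - 1) = 1) (a b : A) :
    fixedPoint θ ℓ a b (-1) = a := by
  have := fixedPoint_apply_neg_natCast (θ := θ) hl h1 a b (n := 1) (i := 1) one_pos (by simp; omega)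
  rwa [Nat.cast_one, pow_one, expandPerm_one (by omega), h1] at this

theorem iterate_substSeq_apply_eq_fixedPoint (hl : 2 ≤ ℓ) (h0 : θ 0 = 1) (h1 : θ (ℓ - 1) = 1)
    (y : ℤ → A) {n : ℕ} {j : ℤ} (hj : j ∈ Set.Ico (-(ℓ : ℤ) ^ n) ((ℓ : ℤ) ^ n)) :
    (substSeq θ ℓ)^[n] y j = fixedPoint θ ℓ (y (-1)) (y 0) j := by
  obtain ⟨hj₁, hj₂⟩ := hj
  rcases le_or_gt 0 j with hj | hj
  · lift j to ℕ using hj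
    have hjn : j < ℓ ^ n := by exact_mod_cast hj₂
    simpa [fixedPoint_apply_natCast hl h0 _ _ hjn] using iterate_substSeq_apply y n 0 hjn
  · obtain ⟨i, rfl⟩ : ∃ i : ℕ, j = -i := ⟨j.natAbs, by omega⟩
    have hin : i ≤ ℓ ^ n := by exact_mod_cast (by omega : (i : ℤ) ≤ (ℓ : ℤ) ^ n)
    have hi : 0 < i := by omega
    have := iterate_substSeq_apply (θ := θ) (ℓ := ℓ) y n (-1) (r := ℓ ^ n - i) (by omega)
    rw [Nat.cast_sub hin, Nat.cast_pow, show (ℓ : ℤ) ^ n * -1 + ((ℓ : ℤ) ^ n - i) = -i by ring]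
      at this
    rw [this, fixedPoint_apply_neg_natCast hl h1 _ _ hi hin]

theorem substSeq_fixedPoint (hl : 2 ≤ ℓ) (h0 : θ 0 = 1) (h1 : θ (ℓ - 1) = 1) (a b : A) :
    substSeq θ ℓ (fixedPoint θ ℓ a b) = fixedPoint θ ℓ a b := by
  set x := fixedPoint θ ℓ a b
  have hx : ∀ n j, j ∈ Set.Ico (-(ℓ : ℤ) ^ n) ((ℓ : ℤ) ^ n) → (substSeq θ ℓ)^[n] x j = x j :=
    fun n j hj => by
      have ha : x (-1) = a := fixedPoint_apply_neg_one hl h1 a b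
      rw [iterate_substSeq_apply_eq_fixedPoint hl h0 h1 x hj, ha]
      rfl
  funext j
  obtain ⟨q, r, hr, rfl⟩ := exists_eq_mul_add (by omega : 0 < ℓ) j
  obtain ⟨n, hq₁, hq₂⟩ := (eventually_mem_Ico_pow hl q).exists
  have hbound : (ℓ : ℤ) * q + r ∈ Set.Ico (-(ℓ : ℤ) ^ (n + 1)) ((ℓ : ℤ) ^ (n + 1)) := by
    have hℓ : (2 : ℤ) ≤ ℓ := by exact_mod_cast hl
    have hr' : (r : ℤ) < ℓ := by exact_mod_cast hr
    rw [pow_succ]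
    constructor <;> nlinarith
  calc substSeq θ ℓ x (ℓ * q + r) = θ r ((substSeq θ ℓ)^[n] x q) := by
        rw [substSeq_apply_mul_add _ _ hr, hx n q ⟨hq₁, hq₂⟩]
    _ = (substSeq θ ℓ)^[n + 1] x (ℓ * q + r) := by
        rw [iterate_succ_apply', substSeq_apply_mul_add _ _ hr]
    _ = x (ℓ * q + r) := hx (n + 1) _ hbound

def IsLegal (θ : ℕ → Equiv.Perm A) (ℓ : ℕ) (a b : A) : Prop :=
  ∃ k c i, i + 1 < ℓ ^ k ∧ expandPerm θ ℓ k i c = a ∧ expandPerm θ ℓ k (i + 1) c = b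

theorem isLegal_of_mem {x : ℤ → A} (hx : x ∈ XSet θ ℓ) (i : ℤ) :
    IsLegal θ ℓ (x i) (x (i + 1)) := by
  obtain ⟨k, a, j, hb, hv⟩ := hx i 2
  exact ⟨k, a, j, by omega, by simpa using (hv 0 two_pos).symm,
    by simpa using (hv 1 one_lt_two).symm⟩

theorem fixedPoint_expandPerm_apply (hl : 2 ≤ ℓ) (h0 : θ 0 = 1) (h1 : θ (ℓ - 1) = 1)
    (k i : ℕ) (c : A) {n : ℕ} {j : ℤ}
    (hj : j ∈ Set.Ico (-(ℓ : ℤ) ^ n) ((ℓ : ℤ) ^ n)) {N : ℕ}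
    (hN : (N : ℤ) = (ℓ : ℤ) ^ n * (i + 1) + j) :
    fixedPoint θ ℓ (expandPerm θ ℓ k i c) (expandPerm θ ℓ k (i + 1) c) j
      = expandPerm θ ℓ (n + k) N c := by
  obtain ⟨hj₁, hj₂⟩ := hj
  rcases le_or_gt 0 j with hj | hj
  · lift j to ℕ using hj
    have hjn : j < ℓ ^ n := by exact_mod_cast hj₂
    obtain rfl : N = j + ℓ ^ n * (i + 1) := by
      have : (N : ℤ) = ((j + ℓ ^ n * (i + 1) : ℕ) : ℤ) := by rw [hN]; push_cast; ring
      exact_mod_cast this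
    rw [fixedPoint_apply_natCast hl h0 _ _ hjn, expandPerm_add_mul hjn, Equiv.Perm.mul_apply]
  · obtain ⟨t, rfl⟩ : ∃ t : ℕ, j = -t := ⟨j.natAbs, by omega⟩
    have htn : t ≤ ℓ ^ n := by exact_mod_cast (by omega : (t : ℤ) ≤ (ℓ : ℤ) ^ n)
    obtain rfl : N = (ℓ ^ n - t) + ℓ ^ n * i := by
      have : (N : ℤ) = ((ℓ ^ n - t + ℓ ^ n * i : ℕ) : ℤ) := by
        rw [hN]; push_cast [Nat.cast_sub htn]; ring
      exact_mod_cast this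
    rw [fixedPoint_apply_neg_natCast hl h1 _ _ (by omega) htn, expandPerm_add_mul (by omega),
      Equiv.Perm.mul_apply]

theorem fixedPoint_mem (hl : 2 ≤ ℓ) (h0 : θ 0 = 1) (h1 : θ (ℓ - 1) = 1) {a b : A}
    (hab : IsLegal θ ℓ a b) : fixedPoint θ ℓ a b ∈ XSet θ ℓ := by
  obtain ⟨k, c, i, hik, rfl, rfl⟩ := hab
  intro i₀ m
  obtain ⟨n, hn⟩ : ∃ n, i₀.natAbs + m < ℓ ^ n := ⟨_, Nat.lt_pow_self (by omega)⟩
  have hn' : (i₀.natAbs : ℤ) + m < (ℓ : ℤ) ^ n := by exact_mod_cast hn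
  have hblock : (ℓ : ℤ) ^ n * (i + 2) ≤ (ℓ : ℤ) ^ (n + k) := by
    rw [pow_add]
    exact mul_le_mul_of_nonneg_left (by exact_mod_cast hik) (by positivity)
  have hsplit : (ℓ : ℤ) ^ n * (i + 2) = (ℓ : ℤ) ^ n * (i + 1) + (ℓ : ℤ) ^ n := by ring
  have hle : (ℓ : ℤ) ^ n ≤ (ℓ : ℤ) ^ n * (i + 1) :=
    le_mul_of_one_le_right (by positivity) (by omega)
  refine ⟨n + k, c, ((ℓ : ℤ) ^ n * (i + 1) + i₀).toNat, ?_, fun t ht => ?_⟩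
  · zify
    rw [Int.toNat_of_nonneg (by omega)]
    omega
  · refine fixedPoint_expandPerm_apply hl h0 h1 k i c ⟨by omega, by omega⟩ ?_
    push_cast
    rw [Int.toNat_of_nonneg (by omega)]
    ring

theorem mem_Fib0_of_isFixedPt {x : ↥(XSet θ ℓ)} (hx : IsFixedPt (substSeq θ ℓ) x.1) :
    x ∈ Fib0 θ ℓ :=
  fun n => ⟨x.1, x.2, (hx.iterate n).eq⟩

theorem exists_Fib0_eq_fixedPoint (hl : 2 ≤ ℓ) (h0 : θ 0 = 1) (h1 : θ (ℓ - 1) = 1) {a b : A}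
    (hab : IsLegal θ ℓ a b) : ∃ y : ↥(Fib0 θ ℓ), y.1.1 = fixedPoint θ ℓ a b :=
  ⟨⟨⟨_, fixedPoint_mem hl h0 h1 hab⟩, mem_Fib0_of_isFixedPt (substSeq_fixedPoint hl h0 h1 a b)⟩,
    rfl⟩

theorem eq_fixedPoint_of_mem_Fib0 (hl : 2 ≤ ℓ) (h0 : θ 0 = 1) (h1 : θ (ℓ - 1) = 1)
    {x : ↥(XSet θ ℓ)} (hx : x ∈ Fib0 θ ℓ) : x.1 = fixedPoint θ ℓ (x.1 (-1)) (x.1 0) := by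
  funext j
  obtain ⟨n, hn⟩ := (eventually_mem_Ico_pow hl j).exists
  obtain ⟨z, -, hz⟩ := hx n
  rw [← hz, iterate_substSeq_apply_eq_fixedPoint hl h0 h1 z hn,
    iterate_substSeq_apply_eq_fixedPoint hl h0 h1 z (neg_one_mem_Ico_pow (by omega) n),
    iterate_substSeq_apply_eq_fixedPoint hl h0 h1 z (zero_mem_Ico_pow (by omega) n),
    fixedPoint_apply_neg_one hl h1, fixedPoint_apply_zero]

theorem isFixedPt_of_mem_Fib0 (hl : 2 ≤ ℓ) (h0 : θ 0 = 1) (h1 : θ (ℓ - 1) = 1)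
    {x : ↥(XSet θ ℓ)} (hx : x ∈ Fib0 θ ℓ) : IsFixedPt (substSeq θ ℓ) x.1 := by
  rw [IsFixedPt, eq_fixedPoint_of_mem_Fib0 hl h0 h1 hx]
  exact substSeq_fixedPoint hl h0 h1 _ _

theorem apply_add_pow_mul_of_isFixedPt (hl : 2 ≤ ℓ) (h0 : θ 0 = 1) (h1 : θ (ℓ - 1) = 1)
    {x : ℤ → A} (hx : IsFixedPt (substSeq θ ℓ) x) (q : ℤ) {n : ℕ} {j : ℤ}
    (hj : j ∈ Set.Ico (-(ℓ : ℤ) ^ n) ((ℓ : ℤ) ^ n)) :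
    x (j + (ℓ : ℤ) ^ n * q) = fixedPoint θ ℓ (x (q - 1)) (x q) j := by
  calc x (j + (ℓ : ℤ) ^ n * q) = (substSeq θ ℓ)^[n] (shiftSeq q x) j := by
        rw [iterate_substSeq_shiftSeq (by omega), (hx.iterate n).eq]; rfl
    _ = fixedPoint θ ℓ (x (q - 1)) (x q) j := by
        rw [iterate_substSeq_apply_eq_fixedPoint hl h0 h1 _ hj]
        simp only [shiftSeq, zero_add, neg_add_eq_sub]

theorem apply_add_of_isFixedPt_of_dvd (hl : 2 ≤ ℓ) (h0 : θ 0 = 1) (h1 : θ (ℓ - 1) = 1)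
    {x : ℤ → A} (hx : IsFixedPt (substSeq θ ℓ) x) {n : ℕ} {m : ℤ} (hm : (ℓ : ℤ) ^ n ∣ m)
    {j : ℤ} (hj : j ∈ Set.Ico (-(ℓ : ℤ) ^ n) ((ℓ : ℤ) ^ n)) :
    x (j + m) = fixedPoint θ ℓ (x (m - 1)) (x m) j := by
  obtain ⟨q, rfl⟩ := hm
  have hprev := apply_add_pow_mul_of_isFixedPt hl h0 h1 hx q (neg_one_mem_Ico_pow (by omega) n)
  have hcurr := apply_add_pow_mul_of_isFixedPt hl h0 h1 hx q (zero_mem_Ico_pow (by omega) n)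
  rw [fixedPoint_apply_neg_one hl h1, neg_add_eq_sub] at hprev
  rw [fixedPoint_apply_zero, zero_add] at hcurr
  rw [apply_add_pow_mul_of_isFixedPt hl h0 h1 hx q hj, hprev, hcurr]

end FixedPoints

section Columns

variable {θ : ℕ → Equiv.Perm A} {ℓ : ℕ}

def side (ε : Bool) (x : ℤ → A) : A := if ε then x 0 else x (-1)

theorem side_fixedPoint (hl : 2 ≤ ℓ) (h1 : θ (ℓ - 1) = 1) (ε : Bool) (a b : A) :
    side ε (fixedPoint θ ℓ a b) = if ε then b else a := by
  cases ε
  · exact fixedPoint_apply_neg_one hl h1 a b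
  · rfl

theorem fixedPoint_apply_sub_one_and_apply {m : ℤ} (hm : m ≠ 0) (a b : A) :
    fixedPoint θ ℓ a b (m - 1) = column θ ℓ (m - 1) (if 0 < m then b else a) ∧
      fixedPoint θ ℓ a b m = column θ ℓ m (if 0 < m then b else a) := by
  rcases hm.lt_or_gt with h | h
  · simp only [fixedPoint, if_neg (show ¬ 0 ≤ m - 1 by omega), if_neg (show ¬ 0 ≤ m by omega),
      if_neg h.not_gt, and_self]
  · simp only [fixedPoint, if_pos (show 0 ≤ m - 1 by omega), if_pos h.le, if_pos h, and_self]

theorem apply_eq_column_of_mem_Fib0 (hl : 2 ≤ ℓ) (h0 : θ 0 = 1) (h1 : θ (ℓ - 1) = 1)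
    {x : ↥(XSet θ ℓ)} (hx : x ∈ Fib0 θ ℓ) {m : ℤ} (hm : m ≠ 0) :
    x.1 (m - 1) = column θ ℓ (m - 1) (side (decide (0 < m)) x.1) ∧
      x.1 m = column θ ℓ m (side (decide (0 < m)) x.1) := by
  rw [eq_fixedPoint_of_mem_Fib0 hl h0 h1 hx, side_fixedPoint hl h1]
  simpa using fixedPoint_apply_sub_one_and_apply hm _ _

theorem isAdjacentColumns_column (hl : 2 ≤ ℓ) (h0 : θ 0 = 1) (h1 : θ (ℓ - 1) = 1) {m : ℤ}
    (hm : m ≠ 0) : IsAdjacentColumns θ ℓ (column θ ℓ (m - 1)) (column θ ℓ m) := by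
  rcases hm.lt_or_gt with h | h
  · obtain ⟨t, rfl⟩ : ∃ t : ℕ, m = -t := ⟨m.natAbs, by omega⟩
    have hts : t + 1 < ℓ ^ (t + 1) := Nat.lt_pow_self (by omega)
    refine ⟨t + 1, ℓ ^ (t + 1) - t, by omega, by omega, ?_,
      (column_neg_natCast hl h1 (by omega) (by omega)).symm⟩
    rw [show -(t : ℤ) - 1 = -((t + 1 : ℕ) : ℤ) by push_cast; ring,
      column_neg_natCast hl h1 (by omega) hts.le, Nat.sub_sub]
  · obtain ⟨u, rfl⟩ : ∃ u : ℕ, m = u := ⟨m.natAbs, by omega⟩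
    have hu : u < ℓ ^ u := Nat.lt_pow_self (by omega)
    refine ⟨u, u, by omega, hu, ?_, (column_natCast hl h0 hu).symm⟩
    rw [show (u : ℤ) - 1 = ((u - 1 : ℕ) : ℤ) by omega,
      column_natCast hl h0 (by omega : u - 1 < ℓ ^ u)]

theorem IsAdjacentColumns.exists_column_eq (hl : 2 ≤ ℓ) (h0 : θ 0 = 1) (h1 : θ (ℓ - 1) = 1)
    {q p : Equiv.Perm A} (h : IsAdjacentColumns θ ℓ q p) (ε : Bool) :
    ∃ m ≠ 0, decide (0 < m) = ε ∧ column θ ℓ (m - 1) = q ∧ column θ ℓ m = p := by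
  obtain ⟨s, u, hu, hus, rfl, rfl⟩ := h
  cases ε
  · refine ⟨-((ℓ ^ s - u : ℕ) : ℤ), by omega, decide_eq_false (by omega), ?_, ?_⟩
    · rw [show -((ℓ ^ s - u : ℕ) : ℤ) - 1 = -((ℓ ^ s - u + 1 : ℕ) : ℤ) by push_cast; ring,
        column_neg_natCast hl h1 (n := s) (by omega) (by omega)]
      congr 1
      omega
    · rw [column_neg_natCast hl h1 (n := s) (by omega) (by omega)]
      congr 1
      omega
  · refine ⟨u, by omega, decide_eq_true (by omega), ?_, column_natCast hl h0 hus⟩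
    rw [show (u : ℤ) - 1 = ((u - 1 : ℕ) : ℤ) by omega, column_natCast hl h0 (n := s) (by omega)]

theorem IsAdjacentColumns.isLegal {q p : Equiv.Perm A} (h : IsAdjacentColumns θ ℓ q p) (c : A) :
    IsLegal θ ℓ (q c) (p c) := by
  obtain ⟨s, u, hu, hus, rfl, rfl⟩ := h
  exact ⟨s, c, u - 1, by omega, rfl, by rw [Nat.sub_add_cancel hu]⟩

end Columns

section Recognizability

variable {θ : ℕ → Equiv.Perm A} {ℓ : ℕ}

theorem two_le_of_nonempty (h : (XSet θ ℓ).Nonempty) : 2 ≤ ℓ := by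
  obtain ⟨x, hx⟩ := h
  obtain ⟨k, -, j, hj, -⟩ := hx 0 2
  by_contra hℓ
  have : ℓ ^ k ≤ 1 := pow_le_one₀ (Nat.zero_le ℓ) (by omega)
  omega

theorem exists_expandPerm_block (hl : 0 < ℓ) {w : ℤ → A} (hw : w ∈ XSet θ ℓ) (K : ℕ) :
    ∃ (t₀ : ℤ) (e : A), ∀ t < ℓ ^ K, w (t₀ + t) = expandPerm θ ℓ K t e := by
  obtain ⟨k, e, J, hJ, hv⟩ := hw 0 (2 * ℓ ^ K)
  have hK : 0 < ℓ ^ K := pow_pos hl K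
  obtain ⟨s, rfl⟩ : ∃ s, k = K + s := Nat.exists_eq_add_of_le <| by
    by_contra h
    have := Nat.pow_le_pow_right hl (le_of_not_ge h)
    omega
  obtain ⟨Q, R, hR, hQ⟩ : ∃ Q R, R < ℓ ^ K ∧ ℓ ^ K * Q + R = J + ℓ ^ K - 1 :=
    ⟨_, _, Nat.mod_lt _ hK, Nat.div_add_mod _ _⟩
  refine ⟨(ℓ ^ K * Q - J : ℕ), expandPerm θ ℓ s Q e, fun t ht => ?_⟩
  have := hv (ℓ ^ K * Q - J + t) (by omega)
  rw [zero_add, Nat.cast_add] at this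
  rw [this, show J + (ℓ ^ K * Q - J + t) = t + ℓ ^ K * Q by omega, expandPerm_add_mul ht,
    Equiv.Perm.mul_apply]

theorem IsLegal.exists_apply_eq (hl : 0 < ℓ) (hprim : IsPrimitive θ ℓ) {a b : A}
    (hab : IsLegal θ ℓ a b) {w : ℤ → A} (hw : w ∈ XSet θ ℓ) : ∃ i, w i = a ∧ w (i + 1) = b := by
  obtain ⟨k, c, i, hik, rfl, rfl⟩ := hab
  obtain ⟨p, -, hp⟩ := hprim
  obtain ⟨t₀, e, he⟩ := exists_expandPerm_block hl hw (k + p)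
  obtain ⟨u, hu, rfl⟩ := hp e c
  refine ⟨t₀ + (i + ℓ ^ k * u : ℕ), ?_, ?_⟩
  · rw [he _ (add_pow_mul_lt_pow_add (by omega) hu), expandPerm_add_mul (by omega),
      Equiv.Perm.mul_apply]
  · rw [add_assoc, show ((i + ℓ ^ k * u : ℕ) : ℤ) + 1 = ((i + 1 + ℓ ^ k * u : ℕ) : ℤ) by
        push_cast; ring, he _ (add_pow_mul_lt_pow_add hik hu), expandPerm_add_mul hik,
      Equiv.Perm.mul_apply]

theorem finite_of_forall_isLegal [Finite A] (τ : Equiv.Perm A)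
    (hτ : ∀ a b, IsLegal θ ℓ a b → b = τ a) : (XSet θ ℓ).Finite := by
  have hx : ∀ x ∈ XSet θ ℓ, x = fun i : ℤ => (τ ^ i) (x 0) := by
    intro x hx
    funext i
    induction i using Int.induction_on with
    | zero => simp
    | succ i ih =>
      rw [hτ _ _ (isLegal_of_mem hx i), ih, add_comm, zpow_add, zpow_one, Equiv.Perm.mul_apply]
    | pred i ih =>
      have h := hτ _ _ (isLegal_of_mem hx (-i - 1))
      rw [sub_add_cancel, ih, eq_comm, ← Equiv.Perm.eq_inv_iff_eq] at h
      rw [h, ← Equiv.Perm.mul_apply, ← zpow_neg_one, ← zpow_add, neg_add_eq_sub]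
  exact (Set.finite_range fun a : A => fun i : ℤ => (τ ^ i) a).subset
    fun x hx' => ⟨x 0, (hx x hx').symm⟩

theorem substSeq_ne_shiftSeq_substSeq [Finite A] (hl : 0 < ℓ) (h0 : θ 0 = 1)
    (h1 : θ (ℓ - 1) = 1) (hprim : IsPrimitive θ ℓ) (haper : (XSet θ ℓ).Infinite) {r : ℕ}
    (hr : 0 < r) (hrl : r < ℓ) (z : ℤ → A) {w : ℤ → A} (hw : w ∈ XSet θ ℓ) :
    substSeq θ ℓ z ≠ shiftSeq r (substSeq θ ℓ w) := by
  intro heq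
  have hcurr : ∀ k, z k = θ r (w k) := fun k => by
    have := congrFun heq (ℓ * k + (0 : ℕ))
    rwa [substSeq_apply_mul_add _ _ hl, h0, Equiv.Perm.one_apply, shiftSeq, Nat.cast_zero,
      add_zero, substSeq_apply_mul_add _ _ hrl] at this
  have hprev : ∀ k, z (k - 1) = θ (r - 1) (w k) := fun k => by
    have := congrFun heq (ℓ * (k - 1) + (ℓ - 1 : ℕ))
    rwa [substSeq_apply_mul_add _ _ (by omega), h1, Equiv.Perm.one_apply, shiftSeq,
      show (ℓ : ℤ) * (k - 1) + ((ℓ - 1 : ℕ) : ℤ) + r = ℓ * k + ((r - 1 : ℕ) : ℤ) by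
        push_cast [Nat.one_le_iff_ne_zero.2 hl.ne', Nat.one_le_iff_ne_zero.2 hr.ne']; ring,
      substSeq_apply_mul_add _ _ (by omega)] at this
  have hstep : ∀ k, w (k + 1) = ((θ (r - 1))⁻¹ * θ r) (w k) := fun k => by
    have := hprev (k + 1)
    rw [add_sub_cancel_right, hcurr] at this
    rw [Equiv.Perm.mul_apply, this]
    simp
  refine haper (finite_of_forall_isLegal ((θ (r - 1))⁻¹ * θ r) fun a b hab => ?_)
  obtain ⟨i, rfl, rfl⟩ := hab.exists_apply_eq hl hprim hw
  exact hstep i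

theorem iterate_substSeq_ne_shiftSeq [Finite A] (hl : 0 < ℓ) (h0 : θ 0 = 1)
    (h1 : θ (ℓ - 1) = 1) (hprim : IsPrimitive θ ℓ) (haper : (XSet θ ℓ).Infinite) (k : ℕ)
    {r : ℕ} (hr : 0 < r) (hrk : r < ℓ ^ k) (z : ℤ → A) {w : ℤ → A} (hw : w ∈ XSet θ ℓ) :
    (substSeq θ ℓ)^[k] z ≠ shiftSeq r ((substSeq θ ℓ)^[k] w) := by
  induction k generalizing r z w with
  | zero => simp at hrk; omega
  | succ k ih =>
    intro heq
    obtain ⟨r₀, q, hr₀, hq, rfl⟩ : ∃ r₀ q, r₀ < ℓ ∧ q < ℓ ^ k ∧ r = r₀ + ℓ * q :=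
      ⟨r % ℓ, r / ℓ, Nat.mod_lt _ hl, Nat.div_lt_of_lt_mul (by rwa [← pow_succ']),
        (Nat.mod_add_div r ℓ).symm⟩
    rw [iterate_succ_apply', iterate_succ_apply', Nat.cast_add, Nat.cast_mul,
      ← shiftSeq_shiftSeq, ← substSeq_shiftSeq hl] at heq
    rcases Nat.eq_zero_or_pos r₀ with rfl | hr₀'
    · have hq0 : 0 < q := Nat.pos_of_ne_zero (by rintro rfl; simp at hr)
      refine ih hq0 hq z hw (substSeq_injective hl h0 ?_)
      rwa [Nat.cast_zero, shiftSeq_zero] at heq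
    · exact substSeq_ne_shiftSeq_substSeq hl h0 h1 hprim haper hr₀' hr₀ _
        (shiftSeq_mem _ (iterate_substSeq_mem hl hw k)) heq

end Recognizability

/-- `σⁱ(θⁿ(X_θ))`, the set of points whose odometer coordinate is `≡ i mod ℓⁿ`. -/
def residueSet (θ : ℕ → Equiv.Perm A) (ℓ : ℕ) (n i : ℕ) : Set ↥(XSet θ ℓ) :=
  { x | ∃ z ∈ XSet θ ℓ, shiftSeq (i : ℤ) ((substSeq θ ℓ)^[n] z) = (x : ℤ → A) }

theorem shiftX_mem_residueSet {θ : ℕ → Equiv.Perm A} {ℓ : ℕ} (hl : 0 < ℓ) {n i : ℕ} {m : ℤ}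
    (hm : (ℓ : ℤ) ^ n ∣ m) {x : ↥(XSet θ ℓ)} (hx : x ∈ residueSet θ ℓ n i) :
    shiftX θ ℓ m x ∈ residueSet θ ℓ n i := by
  obtain ⟨z, hz, hzx⟩ := hx
  obtain ⟨q, rfl⟩ := hm
  refine ⟨shiftSeq q z, shiftSeq_mem q hz, ?_⟩
  change _ = shiftSeq _ x.1
  rw [iterate_substSeq_shiftSeq hl, shiftSeq_shiftSeq, ← hzx, shiftSeq_shiftSeq, add_comm]

theorem mem_residueSet_of_mem_Fib0 {θ : ℕ → Equiv.Perm A} {ℓ : ℕ} (hl : 2 ≤ ℓ)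
    (h0 : θ 0 = 1) (h1 : θ (ℓ - 1) = 1) {x : ↥(XSet θ ℓ)} (hx : x ∈ Fib0 θ ℓ) (n : ℕ) (q : ℤ)
    (r : ℕ) :
    shiftX θ ℓ ((ℓ : ℤ) ^ n * q + r) x ∈ residueSet θ ℓ n r := by
  refine ⟨shiftSeq q x.1, shiftSeq_mem q x.2, ?_⟩
  rw [iterate_substSeq_shiftSeq (by omega), ((isFixedPt_of_mem_Fib0 hl h0 h1 hx).iterate n).eq,
    shiftSeq_shiftSeq, add_comm]
  rfl

section Topology

variable {θ : ℕ → Equiv.Perm A} {ℓ : ℕ} [TopologicalSpace A]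

theorem isClosed_XSet [DiscreteTopology A] : IsClosed (XSet θ ℓ) := by
  have hE : XSet θ ℓ = ⋂ (i : ℤ) (m : ℕ),
      (fun (x : ℤ → A) (t : Fin m) => x (i + (t : ℕ))) ⁻¹'
        {f | ∃ k a j, j + m ≤ ℓ ^ k ∧ ∀ t : Fin m, f t = expandPerm θ ℓ k (j + t) a} := by
    ext x
    simp only [XSet, Set.mem_iInter, Set.mem_preimage]
    refine forall_congr' fun i => forall_congr' fun m => ?_
    exact exists₃_congr fun k a j => and_congr_right fun _ =>
      ⟨fun hv t => hv t t.isLt, fun hv t ht => hv ⟨t, ht⟩⟩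
  rw [hE]
  exact isClosed_iInter fun i => isClosed_iInter fun m =>
    (isClosed_discrete _).preimage (continuous_pi fun t => continuous_apply _)

theorem compactSpace_XSet [DiscreteTopology A] [Finite A] : CompactSpace ↥(XSet θ ℓ) :=
  isCompact_iff_compactSpace.1 isClosed_XSet.isCompact

theorem isClosed_residueSet [DiscreteTopology A] [Finite A] (n i : ℕ) :
    IsClosed (residueSet θ ℓ n i) := by
  have hcont : Continuous (shiftSeq (i : ℤ) ∘ (substSeq θ ℓ)^[n] : (ℤ → A) → ℤ → A) :=
    (continuous_pi fun j => continuous_apply _).comp <| Continuous.iterate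
      (continuous_pi fun m => continuous_of_discreteTopology.comp (continuous_apply _)) n
  exact ((isClosed_XSet.isCompact.image hcont).isClosed).preimage continuous_subtype_val

theorem tendsto_shiftX_iff [DiscreteTopology A] {α : Type*} {F : Filter α} {g : α → ↥(XSet θ ℓ)}
    {y : ↥(XSet θ ℓ)} : Tendsto g F (𝓝 y) ↔ ∀ j : ℤ, ∀ᶠ n in F, (g n).1 j = y.1 j := by
  rw [tendsto_subtype_rng, tendsto_pi_nhds]
  exact forall_congr' fun j => by rw [nhds_discrete A, tendsto_pure]

theorem apply_eq_of_tendsto_shiftX [DiscreteTopology A] {α : Type*} {F : Filter α} [F.NeBot]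
    {m : α → ℤ} {f : ↥(XSet θ ℓ) → ↥(XSet θ ℓ)} (hf : Tendsto (fun k => shiftX θ ℓ (m k)) F (𝓝 f))
    {x : ↥(XSet θ ℓ)} {j : ℤ} {v : A} (h : ∀ᶠ k in F, x.1 (j + m k) = v) : (f x).1 j = v := by
  obtain ⟨k, hk, hv⟩ := ((tendsto_shiftX_iff.1 (tendsto_pi_nhds.1 hf x) j).and h).exists
  exact hk.symm.trans hv

theorem exists_ultrafilter_tendsto_shiftX {f : ↥(XSet θ ℓ) → ↥(XSet θ ℓ)}
    (hf : f ∈ EllisZ θ ℓ) :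
    ∃ U : Ultrafilter ℤ, Tendsto (fun n => shiftX θ ℓ n) (U : Filter ℤ) (𝓝 f) := by
  obtain ⟨V, hV, hVf⟩ := mem_closure_iff_ultrafilter.1 hf
  have : (comap (fun n => shiftX θ ℓ n) (V : Filter _)).NeBot :=
    comap_neBot fun t ht => by
      obtain ⟨_, hyt, n, rfl⟩ := V.nonempty_of_mem (inter_mem ht hV)
      exact ⟨n, hyt⟩
  exact ⟨Ultrafilter.of _, ((map_mono (Ultrafilter.of_le _)).trans map_comap_le).trans hVf⟩

theorem exists_mem_EfibSet_tendsto [DiscreteTopology A] [Finite A] (hl : 0 < ℓ) (m : ℕ → ℤ)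
    (hm : ∀ n, ∀ᶠ k in atTop, (ℓ : ℤ) ^ n ∣ m k) :
    ∃ F ∈ EfibSet θ ℓ, Tendsto (fun k => shiftX θ ℓ (m k)) (hyperfilter ℕ : Filter ℕ) (𝓝 F) := by
  have := compactSpace_XSet (θ := θ) (ℓ := ℓ)
  have hlim : ∀ x, ∃ y, Tendsto (fun k => shiftX θ ℓ (m k) x) (hyperfilter ℕ : Filter ℕ) (𝓝 y) :=
    fun x => (isCompact_univ.ultrafilter_le_nhds ((hyperfilter ℕ).map _) (by simp)).imp
      fun _ h => h.2
  choose F hF using hlim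
  have hFlim := tendsto_pi_nhds.2 hF
  refine ⟨F, ⟨mem_closure_of_tendsto hFlim (Eventually.of_forall fun k => ⟨m k, rfl⟩),
    fun n i x hx => ?_⟩, hFlim⟩
  exact (isClosed_residueSet n i).mem_of_tendsto (hF x)
    (Eventually.mono (Nat.hyperfilter_le_atTop (hm n)) fun k hk => shiftX_mem_residueSet hl hk hx)

end Topology

section Collapse

variable {θ : ℕ → Equiv.Perm A} {ℓ : ℕ}

open Classical in
/-- `x ↦ θ^∞(q c).θ^∞(p c)` with `c = side ε x`; the fallback `x` is only reached when
`(q c) (p c)` is not a legal word, which cannot happen for adjacent columns `q, p`. -/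
noncomputable def collapse (θ : ℕ → Equiv.Perm A) (ℓ : ℕ) (ε : Bool) (q p : Equiv.Perm A)
    (x : ↥(Fib0 θ ℓ)) : ↥(Fib0 θ ℓ) :=
  if h : ∃ y : ↥(Fib0 θ ℓ), y.1.1 = fixedPoint θ ℓ (q (side ε x.1.1)) (p (side ε x.1.1))
  then h.choose else x

theorem collapse_val (hl : 2 ≤ ℓ) (h0 : θ 0 = 1) (h1 : θ (ℓ - 1) = 1) {q p : Equiv.Perm A}
    (hqp : IsAdjacentColumns θ ℓ q p) (ε : Bool) (x : ↥(Fib0 θ ℓ)) :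
    (collapse θ ℓ ε q p x).1.1 = fixedPoint θ ℓ (q (side ε x.1.1)) (p (side ε x.1.1)) := by
  have h := exists_Fib0_eq_fixedPoint hl h0 h1 (hqp.isLegal (side ε x.1.1))
  rw [collapse, dif_pos h]
  exact h.choose_spec

theorem collapse_comp_collapse (hl : 2 ≤ ℓ) (h0 : θ 0 = 1) (h1 : θ (ℓ - 1) = 1)
    {q₁ p₁ q₂ p₂ : Equiv.Perm A} (h₁ : IsAdjacentColumns θ ℓ q₁ p₁)
    (h₂ : IsAdjacentColumns θ ℓ q₂ p₂) (ε₁ ε₂ : Bool) :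
    collapse θ ℓ ε₁ q₁ p₁ ∘ collapse θ ℓ ε₂ q₂ p₂ =
      collapse θ ℓ ε₂ (q₁ * if ε₁ then p₂ else q₂) (p₁ * if ε₁ then p₂ else q₂) := by
  have h₃ := h₁.mul_right (g := if ε₁ then p₂ else q₂) <| by
    split <;> simp [h₂.left_mem, h₂.right_mem]
  funext x
  refine Subtype.ext (Subtype.ext ?_)
  rw [comp_apply, collapse_val hl h0 h1 h₁, collapse_val hl h0 h1 h₃, collapse_val hl h0 h1 h₂,
    side_fixedPoint hl h1]
  cases ε₁ <;> rfl

theorem exists_side_eq (hl : 2 ≤ ℓ) (h0 : θ 0 = 1) (h1 : θ (ℓ - 1) = 1) (ε : Bool) (c : A) :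
    ∃ x : ↥(Fib0 θ ℓ), side ε x.1.1 = c := by
  have hlegal : IsLegal θ ℓ (if ε then θ (ℓ - 2) c else c) (if ε then c else θ 1 c) := by
    cases ε
    · exact ⟨1, c, 0, by simp; omega, by simp [expandPerm_one (by omega : 0 < ℓ), h0],
        by simp [expandPerm_one (by omega : 1 < ℓ)]⟩
    · refine ⟨1, c, ℓ - 2, by simp; omega, by simp [expandPerm_one (by omega : ℓ - 2 < ℓ)], ?_⟩
      simp [show ℓ - 2 + 1 = ℓ - 1 by omega, expandPerm_one (by omega : ℓ - 1 < ℓ), h1]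
  obtain ⟨x, hx⟩ := exists_Fib0_eq_fixedPoint hl h0 h1 hlegal
  exact ⟨x, by rw [hx, side_fixedPoint hl h1]; cases ε <;> rfl⟩

theorem collapse_true_ne_collapse_false [Finite A] (hl : 2 ≤ ℓ) (h0 : θ 0 = 1)
    (h1 : θ (ℓ - 1) = 1) (haper : (XSet θ ℓ).Infinite) {q p q' p' : Equiv.Perm A}
    (hqp : IsAdjacentColumns θ ℓ q p) (hqp' : IsAdjacentColumns θ ℓ q' p') :
    collapse θ ℓ true q p ≠ collapse θ ℓ false q' p' := by
  intro heq
  refine haper (finite_of_forall_isLegal (p⁻¹ * p') fun a b hab => ?_)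
  obtain ⟨x, hx⟩ := exists_Fib0_eq_fixedPoint hl h0 h1 hab
  have := congrArg (fun φ => (φ x).1.1 0) heq
  simp only [collapse_val hl h0 h1 hqp, collapse_val hl h0 h1 hqp', hx, side_fixedPoint hl h1,
    fixedPoint_apply_zero, if_true, Bool.false_eq_true, if_false] at this
  rw [Equiv.Perm.mul_apply, ← this]
  simp

theorem collapse_injective [Finite A] (hl : 2 ≤ ℓ) (h0 : θ 0 = 1) (h1 : θ (ℓ - 1) = 1)
    (haper : (XSet θ ℓ).Infinite) {ε ε' : Bool} {q p q' p' : Equiv.Perm A}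
    (hqp : IsAdjacentColumns θ ℓ q p) (hqp' : IsAdjacentColumns θ ℓ q' p')
    (heq : collapse θ ℓ ε q p = collapse θ ℓ ε' q' p') : ε = ε' ∧ q = q' ∧ p = p' := by
  obtain rfl : ε = ε' := by
    cases ε <;> cases ε'
    · rfl
    · exact absurd heq.symm (collapse_true_ne_collapse_false hl h0 h1 haper hqp' hqp)
    · exact absurd heq (collapse_true_ne_collapse_false hl h0 h1 haper hqp hqp')
    · rfl
  have hval : ∀ c, fixedPoint θ ℓ (q c) (p c) = fixedPoint θ ℓ (q' c) (p' c) := fun c => by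
    obtain ⟨x, rfl⟩ := exists_side_eq hl h0 h1 ε c
    rw [← collapse_val hl h0 h1 hqp, ← collapse_val hl h0 h1 hqp', heq]
  refine ⟨rfl, Equiv.ext fun c => ?_, Equiv.ext fun c => ?_⟩
  · simpa only [fixedPoint_apply_neg_one hl h1] using congrFun (hval c) (-1)
  · simpa only [fixedPoint_apply_zero] using congrFun (hval c) 0

end Collapse

section Ellis

variable {θ : ℕ → Equiv.Perm A} {ℓ : ℕ} [TopologicalSpace A] [DiscreteTopology A]

theorem eventually_dvd_of_tendsto [Finite A] (hl : 2 ≤ ℓ) (h0 : θ 0 = 1) (h1 : θ (ℓ - 1) = 1)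
    (hprim : IsPrimitive θ ℓ) (haper : (XSet θ ℓ).Infinite) {f : ↥(XSet θ ℓ) → ↥(XSet θ ℓ)}
    (hf : f ∈ EfibSet θ ℓ) {U : Ultrafilter ℤ}
    (hU : Tendsto (fun m => shiftX θ ℓ m) (U : Filter ℤ) (𝓝 f)) (n : ℕ) :
    ∀ᶠ m in U, (ℓ : ℤ) ^ n ∣ m := by
  obtain ⟨y, hy⟩ := haper.nonempty
  obtain ⟨x, -⟩ := exists_Fib0_eq_fixedPoint hl h0 h1 (isLegal_of_mem hy (-1))
  obtain ⟨r, hr, hrU⟩ : ∃ r ∈ Set.Iio (ℓ ^ n), ∀ᶠ m in U, m % (ℓ : ℤ) ^ n = r :=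
    (Ultrafilter.eventually_exists_mem_iff (Set.finite_Iio _)).1 <| Eventually.of_forall
      fun m => ⟨(m % (ℓ : ℤ) ^ n).toNat, by
        have := Int.emod_lt_of_pos m (pow_pos (by omega : (0 : ℤ) < ℓ) n)
        simp only [Set.mem_Iio]; zify; rw [Int.toNat_of_nonneg (Int.emod_nonneg _ (by positivity))]
        exact this, by
        rw [Int.toNat_of_nonneg (Int.emod_nonneg _ (by positivity))]⟩
  have hfr : f x.1 ∈ residueSet θ ℓ n r :=
    (isClosed_residueSet n r).mem_of_tendsto ((tendsto_pi_nhds.1 hU) x.1) <| hrU.mono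
      fun m hm => by
        rw [← Int.mul_ediv_add_emod m ((ℓ : ℤ) ^ n), hm]
        exact mem_residueSet_of_mem_Fib0 hl h0 h1 x.2 n _ r
  have hf0 : f x.1 ∈ residueSet θ ℓ n 0 :=
    hf.2 n 0 x.1 ⟨x.1.1, x.1.2, by
      rw [Nat.cast_zero, shiftSeq_zero, ((isFixedPt_of_mem_Fib0 hl h0 h1 x.2).iterate n).eq]⟩
  obtain ⟨z, -, hz⟩ := hf0
  obtain ⟨z', hz', hz'f⟩ := hfr
  rcases Nat.eq_zero_or_pos r with rfl | hr0
  · exact hrU.mono fun m hm => Int.dvd_of_emod_eq_zero (by simpa using hm)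
  · rw [Nat.cast_zero, shiftSeq_zero, ← hz'f] at hz
    exact absurd hz (iterate_substSeq_ne_shiftSeq (by omega) h0 h1 hprim haper n hr0 hr z hz')

theorem eq_id_or_exists_of_mem_EfibSet [Finite A] (hl : 2 ≤ ℓ) (h0 : θ 0 = 1)
    (h1 : θ (ℓ - 1) = 1) (hprim : IsPrimitive θ ℓ) (haper : (XSet θ ℓ).Infinite)
    {f : ↥(XSet θ ℓ) → ↥(XSet θ ℓ)} (hf : f ∈ EfibSet θ ℓ) :
    f = id ∨ ∃ m ≠ 0, ∀ x ∈ Fib0 θ ℓ, (f x).1 = fixedPoint θ ℓ (x.1 (m - 1)) (x.1 m) := by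
  obtain ⟨U, hU⟩ := exists_ultrafilter_tendsto_shiftX hf.1
  rcases U.em (· = 0) with hzero | hne
  · refine Or.inl (funext fun x => Subtype.ext (funext fun j => ?_))
    exact apply_eq_of_tendsto_shiftX hU (hzero.mono fun m hm => by simp [hm])
  obtain ⟨P, hP⟩ := (Ultrafilter.eventually_exists_iff (f := U)
    (P := fun (P : A → A → A × A) (m : ℤ) =>
      (fun a b => (fixedPoint θ ℓ a b (m - 1), fixedPoint θ ℓ a b m)) = P)).1
    (Eventually.of_forall fun m => ⟨_, rfl⟩)
  obtain ⟨m₀, hm₀, hPm₀⟩ := (hne.and hP).exists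
  refine Or.inr ⟨m₀, hm₀, fun x hx => funext fun j => apply_eq_of_tendsto_shiftX hU ?_⟩
  obtain ⟨n, hn⟩ := (eventually_mem_Ico_pow hl j).exists
  filter_upwards [eventually_dvd_of_tendsto hl h0 h1 hprim haper hf hU n, hP] with m hdvd hPm
  have hxfix := eq_fixedPoint_of_mem_Fib0 hl h0 h1 hx
  have hpair := congrFun (congrFun (hPm.trans hPm₀.symm) (x.1 (-1))) (x.1 0)
  simp only [Prod.mk.injEq] at hpair
  rw [apply_add_of_isFixedPt_of_dvd hl h0 h1 (isFixedPt_of_mem_Fib0 hl h0 h1 hx) hdvd hn,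
    congrFun hxfix (m - 1), congrFun hxfix m, congrFun hxfix (m₀ - 1), congrFun hxfix m₀,
    hpair.1, hpair.2]

theorem exists_mem_EfibSet_apply_eq_fixedPoint [Finite A] (hl : 2 ≤ ℓ) (h0 : θ 0 = 1)
    (h1 : θ (ℓ - 1) = 1) (m : ℤ) :
    ∃ f ∈ EfibSet θ ℓ, ∀ x ∈ Fib0 θ ℓ, (f x).1 = fixedPoint θ ℓ (x.1 (m - 1)) (x.1 m) := by
  obtain ⟨f, hf, hlim⟩ := exists_mem_EfibSet_tendsto (θ := θ) (by omega)
    (fun n => (ℓ : ℤ) ^ n * m) fun n => eventually_atTop.2 ⟨n, fun k hk =>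
      (pow_dvd_pow _ hk).mul_right m⟩
  refine ⟨f, hf, fun x hx => funext fun j => apply_eq_of_tendsto_shiftX hlim ?_⟩
  exact Eventually.mono (Nat.hyperfilter_le_atTop (eventually_mem_Ico_pow hl j)) fun n hn =>
    apply_add_pow_mul_of_isFixedPt hl h0 h1 (isFixedPt_of_mem_Fib0 hl h0 h1 hx) m hn

theorem collapse_mem_Efib0 [Finite A] (hl : 2 ≤ ℓ) (h0 : θ 0 = 1) (h1 : θ (ℓ - 1) = 1)
    {q p : Equiv.Perm A} (hqp : IsAdjacentColumns θ ℓ q p) (ε : Bool) :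
    collapse θ ℓ ε q p ∈ Efib0 θ ℓ := by
  obtain ⟨m, hm, rfl, rfl, rfl⟩ := hqp.exists_column_eq hl h0 h1 ε
  obtain ⟨f, hf, hfm⟩ := exists_mem_EfibSet_apply_eq_fixedPoint hl h0 h1 (θ := θ) m
  refine ⟨f, hf, fun x => Subtype.ext ?_⟩
  obtain ⟨hprev, hcurr⟩ := apply_eq_column_of_mem_Fib0 hl h0 h1 x.2 hm
  rw [collapse_val hl h0 h1 hqp, hfm x.1 x.2, hprev, hcurr]

theorem eq_id_or_exists_collapse_of_mem_Efib0 [Finite A] (hl : 2 ≤ ℓ) (h0 : θ 0 = 1)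
    (h1 : θ (ℓ - 1) = 1) (hprim : IsPrimitive θ ℓ) (haper : (XSet θ ℓ).Infinite)
    {φ : ↥(Fib0 θ ℓ) → ↥(Fib0 θ ℓ)} (hφ : φ ∈ Efib0 θ ℓ) :
    φ = id ∨ ∃ ε q p, IsAdjacentColumns θ ℓ q p ∧ φ = collapse θ ℓ ε q p := by
  obtain ⟨f, hf, hφf⟩ := hφ
  rcases eq_id_or_exists_of_mem_EfibSet hl h0 h1 hprim haper hf with rfl | ⟨m, hm, hfm⟩
  · exact Or.inl (funext fun x => Subtype.ext (hφf x))
  have hcols := isAdjacentColumns_column hl h0 h1 (θ := θ) hm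
  refine Or.inr ⟨decide (0 < m), _, _, hcols, funext fun x => Subtype.ext (Subtype.ext ?_)⟩
  obtain ⟨hprev, hcurr⟩ := apply_eq_column_of_mem_Fib0 hl h0 h1 x.2 hm
  rw [hφf, hfm x.1 x.2, collapse_val hl h0 h1 hcols, hprev, hcurr]

end Ellis

section Rees

variable {θ : ℕ → Equiv.Perm A} {ℓ : ℕ}

/-- Composing `reesMap θ ℓ g₀ (i, g, ε)` with `reesMap θ ℓ g₀ (j, h, μ)` inserts
`twist g₀ ε * (if ε then 1 else j⁻¹)` between `g` and `h`; this is the sandwich entry `a_{ε,j}`. -/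
def twist (g₀ : Equiv.Perm A) (ε : Bool) : Equiv.Perm A := if ε then 1 else g₀

noncomputable def reesMap (θ : ℕ → Equiv.Perm A) (ℓ : ℕ) (g₀ : Equiv.Perm A) :
    ↥(RSet θ ℓ) × ↥(Gtheta θ ℓ) × Bool → ↥(Fib0 θ ℓ) → ↥(Fib0 θ ℓ)
  | (i, g, ε) => collapse θ ℓ ε ((i : Equiv.Perm A)⁻¹ * (g * twist g₀ ε)) (g * twist g₀ ε)

theorem twist_mem {g₀ : Equiv.Perm A} (hg₀ : g₀ ∈ RSet θ ℓ) (ε : Bool) :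
    twist g₀ ε ∈ Gtheta θ ℓ := by
  cases ε
  · exact rset_subset_G θ ℓ hg₀
  · exact one_mem _

theorem isAdjacentColumns_reesMap [Finite A] {g₀ : Equiv.Perm A} (hg₀ : g₀ ∈ RSet θ ℓ)
    (i : ↥(RSet θ ℓ)) (g : ↥(Gtheta θ ℓ)) (ε : Bool) :
    IsAdjacentColumns θ ℓ ((i : Equiv.Perm A)⁻¹ * (g * twist g₀ ε)) (g * twist g₀ ε) := by
  refine isAdjacentColumns_iff.2 ⟨?_, mem_Gtheta_iff.1 (mul_mem g.2 (twist_mem hg₀ ε))⟩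
  rw [show (g * twist g₀ ε : Equiv.Perm A) * ((i : Equiv.Perm A)⁻¹ * (g * twist g₀ ε))⁻¹ = i by
    group]
  exact i.2

theorem reesMap_mem_Efib0 [Finite A] [TopologicalSpace A] [DiscreteTopology A] (hl : 2 ≤ ℓ)
    (h0 : θ 0 = 1) (h1 : θ (ℓ - 1) = 1) {g₀ : Equiv.Perm A} (hg₀ : g₀ ∈ RSet θ ℓ)
    (P : ↥(RSet θ ℓ) × ↥(Gtheta θ ℓ) × Bool) : reesMap θ ℓ g₀ P ∈ Efib0 θ ℓ := by
  obtain ⟨i, g, ε⟩ := P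
  exact collapse_mem_Efib0 hl h0 h1 (isAdjacentColumns_reesMap hg₀ i g ε) ε

theorem collapse_mem_range_reesMap [Finite A] {g₀ : Equiv.Perm A} (hg₀ : g₀ ∈ RSet θ ℓ)
    {q p : Equiv.Perm A} (hqp : IsAdjacentColumns θ ℓ q p) (ε : Bool) :
    collapse θ ℓ ε q p ∈ Set.range (reesMap θ ℓ g₀) := by
  refine ⟨(⟨p * q⁻¹, hqp.mem_RSet⟩, ⟨p * (twist g₀ ε)⁻¹,
    mul_mem (mem_Gtheta_iff.2 hqp.right_mem) (inv_mem (twist_mem hg₀ ε))⟩, ε), ?_⟩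
  change collapse θ ℓ ε ((p * q⁻¹)⁻¹ * (p * (twist g₀ ε)⁻¹ * twist g₀ ε))
    (p * (twist g₀ ε)⁻¹ * twist g₀ ε) = _
  rw [inv_mul_cancel_right, mul_inv_rev, inv_inv, inv_mul_cancel_right]

theorem reesMap_matMul [Finite A] (hl : 2 ≤ ℓ) (h0 : θ 0 = 1) (h1 : θ (ℓ - 1) = 1)
    {g₀ : Equiv.Perm A} (hg₀ : g₀ ∈ RSet θ ℓ) (P Q : ↥(RSet θ ℓ) × ↥(Gtheta θ ℓ) × Bool) :
    reesMap θ ℓ g₀ (matMul (sandwichA θ ℓ g₀ hg₀) P Q) = reesMap θ ℓ g₀ P ∘ reesMap θ ℓ g₀ Q := by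
  obtain ⟨i, g, ε⟩ := P
  obtain ⟨j, h, μ⟩ := Q
  change reesMap θ ℓ g₀ (i, g * sandwichA θ ℓ g₀ hg₀ ε j * h, μ) =
    reesMap θ ℓ g₀ (i, g, ε) ∘ reesMap θ ℓ g₀ (j, h, μ)
  simp only [reesMap]
  rw [collapse_comp_collapse hl h0 h1 (isAdjacentColumns_reesMap hg₀ i g ε)
    (isAdjacentColumns_reesMap hg₀ j h μ)]
  cases ε <;> simp [sandwichA, twist, mul_assoc]

theorem reesMap_injective [Finite A] (hl : 2 ≤ ℓ) (h0 : θ 0 = 1) (h1 : θ (ℓ - 1) = 1)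
    (haper : (XSet θ ℓ).Infinite) {g₀ : Equiv.Perm A} (hg₀ : g₀ ∈ RSet θ ℓ) :
    Injective (reesMap θ ℓ g₀) := by
  rintro ⟨i, g, ε⟩ ⟨j, h, μ⟩ heq
  obtain ⟨rfl, hq, hp⟩ := collapse_injective hl h0 h1 haper
    (isAdjacentColumns_reesMap hg₀ i g ε) (isAdjacentColumns_reesMap hg₀ j h μ) heq
  obtain rfl : g = h := Subtype.ext (mul_right_cancel hp)
  rw [hp, mul_left_inj, inv_inj] at hq
  rw [Subtype.ext hq]

theorem matMul_sandwichA_matMul {g₀ : Equiv.Perm A} (hg₀ : g₀ ∈ RSet θ ℓ)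
    (i j : ↥(RSet θ ℓ)) (g h : ↥(Gtheta θ ℓ)) (ε μ : Bool) :
    matMul (sandwichA θ ℓ g₀ hg₀) (i, g * h⁻¹, true)
      (matMul (sandwichA θ ℓ g₀ hg₀) (j, h, μ) (⟨g₀, hg₀⟩, 1, ε)) = (i, g, ε) := by
  cases μ <;> simp [matMul, sandwichA, Subtype.ext_iff]

theorem isKernelIn_range_reesMap [Finite A] [TopologicalSpace A] [DiscreteTopology A]
    (hl : 2 ≤ ℓ) (h0 : θ 0 = 1) (h1 : θ (ℓ - 1) = 1) (hprim : IsPrimitive θ ℓ)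
    (haper : (XSet θ ℓ).Infinite) {g₀ : Equiv.Perm A} (hg₀ : g₀ ∈ RSet θ ℓ) :
    IsKernelIn (Efib0 θ ℓ) (Set.range (reesMap θ ℓ g₀)) := by
  refine isKernelIn_of_forall_eq_id_or_mem ⟨_, (⟨g₀, hg₀⟩, 1, true), rfl⟩ ?_ ?_ ?_ ?_
  · rintro _ ⟨P, rfl⟩
    exact reesMap_mem_Efib0 hl h0 h1 hg₀ P
  · intro φ hφ
    rcases eq_id_or_exists_collapse_of_mem_Efib0 hl h0 h1 hprim haper hφ with
      rfl | ⟨ε, q, p, hqp, rfl⟩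
    · exact Or.inl rfl
    · exact Or.inr (collapse_mem_range_reesMap hg₀ hqp ε)
  · rintro _ ⟨P, rfl⟩ _ ⟨Q, rfl⟩
    exact ⟨_, reesMap_matMul hl h0 h1 hg₀ P Q⟩
  · rintro _ ⟨⟨j, h, μ⟩, rfl⟩ _ ⟨⟨i, g, ε⟩, rfl⟩
    refine ⟨_, ⟨(i, g * h⁻¹, true), rfl⟩, _, ⟨(⟨g₀, hg₀⟩, 1, ε), rfl⟩, ?_⟩
    rw [← reesMap_matMul hl h0 h1 hg₀, ← reesMap_matMul hl h0 h1 hg₀,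
      matMul_sandwichA_matMul]

end Rees

theorem stmt_13_general [Fintype A] [TopologicalSpace A] [DiscreteTopology A]
    (θ : ℕ → Equiv.Perm A) (ℓ : ℕ)
    (hprim : IsPrimitive θ ℓ) (haper : (XSet θ ℓ).Infinite) (hsimp : IsSimplified θ ℓ)
    (g₀ : Equiv.Perm A) (hg₀ : g₀ ∈ RSet θ ℓ) :
    ∃ M : Set (↥(Fib0 θ ℓ) → ↥(Fib0 θ ℓ)),
      IsKernelIn (Efib0 θ ℓ) M ∧
      ∃ Θ : ↥(RSet θ ℓ) × ↥(Gtheta θ ℓ) × Bool → (↥(Fib0 θ ℓ) → ↥(Fib0 θ ℓ)),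
        Function.Injective Θ ∧ Set.range Θ = M ∧
        ∀ p q, Θ (matMul (sandwichA θ ℓ g₀ hg₀) p q) = Θ p ∘ Θ q := by
  obtain ⟨h0, h1, -⟩ := hsimp
  have hl : 2 ≤ ℓ := two_le_of_nonempty haper.nonempty
  exact ⟨_, isKernelIn_range_reesMap hl h0 h1 hprim haper hg₀, reesMap θ ℓ g₀,
    reesMap_injective hl h0 h1 haper hg₀, rfl, reesMap_matMul hl h0 h1 hg₀⟩

/-- For a primitive aperiodic bijective (simplified) substitution `θ`, the structural
semigroup `M^fib_0(X_θ)` (the kernel of `E^fib_0(X_θ)`) is isomorphic to the matrix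
semigroup `M[G_θ; I_θ, {±}; A]` with sandwich matrix `a_{+,g} = 1`, `a_{−,g} = g₀ g⁻¹`. -/
theorem stmt_13 [Fintype A] [TopologicalSpace A] [DiscreteTopology A]
    (θ : ℕ → Equiv.Perm A) (ℓ : ℕ) (hl : 0 < ℓ)
    (hprim : IsPrimitive θ ℓ) (haper : (XSet θ ℓ).Infinite) (hsimp : IsSimplified θ ℓ)
    (g₀ : Equiv.Perm A) (hg₀ : g₀ ∈ RSet θ ℓ) :
    ∃ M : Set (↥(Fib0 θ ℓ) → ↥(Fib0 θ ℓ)),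
      IsKernelIn (Efib0 θ ℓ) M ∧
      ∃ Θ : ↥(RSet θ ℓ) × ↥(Gtheta θ ℓ) × Bool → (↥(Fib0 θ ℓ) → ↥(Fib0 θ ℓ)),
        Function.Injective Θ ∧ Set.range Θ = M ∧
        ∀ p q, Θ (matMul (sandwichA θ ℓ g₀ hg₀) p q) = Θ p ∘ Θ q :=
  stmt_13_general θ ℓ hprim haper hsimp g₀ hg₀
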